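/- arXiv:1406.6903 — 2 statements merged into one kernel-verified Lean document; each statement's English description precedes it below -/
import Mathlib

section
/- Let P be a free PRO and ≡₁, ≡₂ two stiff congruences of P with ≡₁ finer than ≡₂. Then for every ≡₂-class [x] of reduced elements, T_{[x]_{≡₂}} = Σ T_{[x']_{≡₁}} summed over ≡₁-classes [x']_{≡₁} contained in [x]_{≡₂}; hence H(P/≡₂) is a sub-bialgebra of H(P/≡₁). -/
/-- A bigraded set of generators, each with a positive input and output arity. -/
structure Bigraded where
  carrier : Type
  genIn : carrier → ℕ
  genOut : carrier → ℕ
  genIn_pos : ∀ g, 0 < genIn g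
  genOut_pos : ∀ g, 0 < genOut g

/-- Formal prograph expressions over the generators `G`. -/
inductive PTerm (G : Bigraded) : Type
  | gen : G.carrier → PTerm G
  | unit : ℕ → PTerm G
  | hcomp : PTerm G → PTerm G → PTerm G
  | vcomp : PTerm G → PTerm G → PTerm G

namespace PTerm
variable {G : Bigraded}

/-- Input arity of a prograph expression. -/
def inAr : PTerm G → ℕ
  | gen g => G.genIn g
  | unit p => p
  | hcomp x y => x.inAr + y.inAr
  | vcomp _ y => y.inAr

/-- Output arity of a prograph expression. -/
def outAr : PTerm G → ℕ
  | gen g => G.genOut g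
  | unit p => p
  | hcomp x y => x.outAr + y.outAr
  | vcomp x _ => x.outAr

end PTerm

/-- The congruence on prograph expressions generated by the PRO axioms:
associativity of both compositions, the interchange law and the unit laws. -/
inductive PRel (G : Bigraded) : PTerm G → PTerm G → Prop
  | refl (x) : PRel G x x
  | symm {x y} : PRel G x y → PRel G y x
  | trans {x y z} : PRel G x y → PRel G y z → PRel G x z
  | hcongr {x x' y y'} : PRel G x x' → PRel G y y' →
      PRel G (.hcomp x y) (.hcomp x' y')
  | vcongr {x x' y y'} : PRel G x x' → PRel G y y' →
      PRel G (.vcomp x y) (.vcomp x' y')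
  | hassoc (x y z) : PRel G (.hcomp (.hcomp x y) z) (.hcomp x (.hcomp y z))
  | vassoc (x y z) : PRel G (.vcomp (.vcomp x y) z) (.vcomp x (.vcomp y z))
  | interchange (x x' y y') :
      PRel G (.hcomp (.vcomp x y) (.vcomp x' y')) (.vcomp (.hcomp x x') (.hcomp y y'))
  | unit_hcomp (p q) : PRel G (.hcomp (.unit p) (.unit q)) (.unit (p + q))
  | hcomp_unit0 (x) : PRel G (.hcomp x (.unit 0)) x
  | unit0_hcomp (x) : PRel G (.hcomp (.unit 0) x) x
  | vcomp_unit (x) : PRel G (.vcomp x (.unit (PTerm.inAr x))) x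
  | unit_vcomp (x) : PRel G (.vcomp (.unit (PTerm.outAr x)) x) x

instance proSetoid (G : Bigraded) : Setoid (PTerm G) :=
  ⟨PRel G, ⟨PRel.refl, PRel.symm, PRel.trans⟩⟩

/-- The free PRO on the bigraded set `G`: prographs, i.e. prograph expressions
modulo the PRO axioms. -/
def FreePRO (G : Bigraded) : Type := Quotient (proSetoid G)

namespace FreePRO
variable {G : Bigraded}

/-- The unit `1_p` of arity `p`. -/
def unitF (p : ℕ) : FreePRO G := ⟦PTerm.unit p⟧

/-- Horizontal composition turns the free PRO into a monoid whose unit is `1_0`. -/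
instance : Monoid (FreePRO G) where
  mul := Quotient.map₂ PTerm.hcomp fun _ _ h _ _ h' => PRel.hcongr h h'
  one := unitF 0
  mul_assoc := by rintro ⟨a⟩ ⟨b⟩ ⟨c⟩; exact Quotient.sound (PRel.hassoc a b c)
  one_mul := by rintro ⟨a⟩; exact Quotient.sound (PRel.unit0_hcomp a)
  mul_one := by rintro ⟨a⟩; exact Quotient.sound (PRel.hcomp_unit0 a)

/-- Vertical composition of prographs. -/
def vcomp : FreePRO G → FreePRO G → FreePRO G :=
  Quotient.map₂ PTerm.vcomp fun _ _ h _ _ h' => PRel.vcongr h h'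

/-- Input arity. -/
def inAr : FreePRO G → ℕ :=
  Quotient.lift PTerm.inAr (by
    intro a b h
    induction h with
    | refl => rfl
    | symm _ ih => omega
    | trans _ _ ih₁ ih₂ => omega
    | hcongr _ _ ih₁ ih₂ => simp [PTerm.inAr, ih₁, ih₂]
    | vcongr _ _ ih₁ ih₂ => simp [PTerm.inAr, ih₁, ih₂]
    | hassoc x y z => simp [PTerm.inAr, Nat.add_assoc]
    | _ => simp [PTerm.inAr])

/-- Output arity. -/
def outAr : FreePRO G → ℕ :=
  Quotient.lift PTerm.outAr (by
    intro a b h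
    induction h with
    | refl => rfl
    | symm _ ih => omega
    | trans _ _ ih₁ ih₂ => omega
    | hcongr _ _ ih₁ ih₂ => simp [PTerm.outAr, ih₁, ih₂]
    | vcongr _ _ ih₁ ih₂ => simp [PTerm.outAr, ih₁, ih₂]
    | hassoc x y z => simp [PTerm.outAr, Nat.add_assoc]
    | _ => simp [PTerm.outAr])

/-- An element is indecomposable if it is not `1_0` and admits no nontrivial
horizontal factorization. -/
def Indecomposable (x : FreePRO G) : Prop :=
  x ≠ 1 ∧ ∀ y z : FreePRO G, x = y * z → y = 1 ∨ z = 1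

/- The maximal horizontal decomposition of an element. -/
open Classical in
noncomputable def maxDec (x : FreePRO G) : List (FreePRO G) :=
  if h : ∃ l : List (FreePRO G), (∀ f ∈ l, Indecomposable f) ∧ x = l.prod then
    h.choose
  else []

/- `red x`: delete the wire factors `1_1` from the maximal decomposition. -/
open Classical in
noncomputable def red (x : FreePRO G) : FreePRO G :=
  ((maxDec x).filter fun f => f ≠ unitF 1).prod

/-- An element is reduced if no factor of its maximal decomposition is a wire. -/
def Reduced (x : FreePRO G) : Prop := red x = x

end FreePRO

open TensorProduct

/-- The underlying algebra of the Hopf algebra `H(P)` of a free PRO: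
the monoid algebra of horizontal composition. -/
abbrev HP (G : Bigraded) : Type := MonoidAlgebra ℚ (FreePRO G)

/-- The basis element `S_x` of `H(P)`. -/
noncomputable def SB {G : Bigraded} (x : FreePRO G) : HP G :=
  MonoidAlgebra.of ℚ (FreePRO G) x

/-- The set of composable pairs `(y, z)` with `y ∘ z = x`. -/
def vpairs {G : Bigraded} (x : FreePRO G) : Set (FreePRO G × FreePRO G) :=
  {p | FreePRO.inAr p.1 = FreePRO.outAr p.2 ∧ FreePRO.vcomp p.1 p.2 = x}

/-- A stiff congruence on the free PRO `FreePRO G`: an equivalence relation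
compatible with both compositions and preserving arities, such that
(C1) classes of reduced elements are finite, (C2) classes of reduced elements
contain only reduced elements, and (C3) equivalent elements have
componentwise-equivalent maximal decompositions of the same length. -/
structure StiffCongruence (G : Bigraded) where
  r : FreePRO G → FreePRO G → Prop
  iseqv : Equivalence r
  arity_in : ∀ {a b : FreePRO G}, r a b → FreePRO.inAr a = FreePRO.inAr b
  arity_out : ∀ {a b : FreePRO G}, r a b → FreePRO.outAr a = FreePRO.outAr b
  hcompat : ∀ {a b c d : FreePRO G}, r a b → r c d → r (a * c) (b * d)
  vcompat : ∀ {a b c d : FreePRO G}, r a b → r c d →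
    r (FreePRO.vcomp a c) (FreePRO.vcomp b d)
  finite_class : ∀ x : FreePRO G, FreePRO.Reduced x → {y | r x y}.Finite
  reduced_class : ∀ {x y : FreePRO G}, FreePRO.Reduced x → r x y → FreePRO.Reduced y
  dec_compat : ∀ {x y : FreePRO G}, r x y →
    List.Forall₂ r (FreePRO.maxDec x) (FreePRO.maxDec y)

namespace StiffCongruence
variable {G : Bigraded}

/-- The setoid underlying a stiff congruence. -/
def toSetoid (c : StiffCongruence G) : Setoid (FreePRO G) := ⟨c.r, c.iseqv⟩

open Classical in
/-- The class-sum `T_{[x]} = Σ_{x' ∈ [x]} S_{x'}` in `H(P)` (defined when the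
class of `x` is finite, e.g. when `x` is reduced). -/
noncomputable def Tclass (c : StiffCongruence G) (x : FreePRO G) : HP G :=
  if h : {y | c.r x y}.Finite then ∑ y ∈ h.toFinset, SB y else 0

end StiffCongruence

/-- **Proposition 3.6.** Let `P` be a free PRO and `≡₁`, `≡₂` two stiff
congruences with `≡₁` finer than `≡₂`. Then for every `≡₂`-class of a reduced
element `x`, `T_{[x]_{≡₂}}` is the sum of the `T_{[x']_{≡₁}}` over the
`≡₁`-classes contained in `[x]_{≡₂}`; hence the span of the `T_{[x]_{≡₂}}`
(i.e. `H(P/≡₂)`) is contained in the span of the `T_{[x']_{≡₁}}`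
(i.e. `H(P/≡₁)`), as a sub-bialgebra. -/
theorem stiff_finer_sub_bialgebra {G : Bigraded}
    (c₁ c₂ : StiffCongruence G)
    (hfine : ∀ a b : FreePRO G, c₁.r a b → c₂.r a b) :
    (∀ x : FreePRO G, FreePRO.Reduced x →
      ∀ hfin : {u : Quotient c₁.toSetoid | c₂.r u.out x}.Finite,
        c₂.Tclass x = ∑ u ∈ hfin.toFinset, c₁.Tclass u.out) ∧
    Submodule.span ℚ {f : HP G | ∃ x : FreePRO G, FreePRO.Reduced x ∧ f = c₂.Tclass x}
      ≤ Submodule.span ℚ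
          {f : HP G | ∃ x : FreePRO G, FreePRO.Reduced x ∧ f = c₁.Tclass x} := by
  classical
  have key : ∀ x : FreePRO G, FreePRO.Reduced x →
      ∀ hfin : {u : Quotient c₁.toSetoid | c₂.r u.out x}.Finite,
        c₂.Tclass x = ∑ u ∈ hfin.toFinset, c₁.Tclass u.out := by
    intro x hx hfin
    have h2 : {y | c₂.r x y}.Finite := c₂.finite_class x hx
    have hred : ∀ u : Quotient c₁.toSetoid, c₂.r u.out x → FreePRO.Reduced u.out := by
      intro u hu
      exact c₂.reduced_class hx (c₂.iseqv.symm hu)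
    set F : Quotient c₁.toSetoid → Finset (FreePRO G) := fun u =>
      if h : {y | c₁.r u.out y}.Finite then h.toFinset else ∅ with hF
    have hmemF : ∀ u : Quotient c₁.toSetoid, c₂.r u.out x →
        ∀ y : FreePRO G, y ∈ F u ↔ c₁.r u.out y := by
      intro u hu y
      have h1 : {y | c₁.r u.out y}.Finite := c₁.finite_class _ (hred u hu)
      simp [hF, dif_pos h1, Set.Finite.mem_toFinset]
    have hout : ∀ y : FreePRO G, c₁.r (Quotient.mk c₁.toSetoid y).out y := by
      intro y
      exact Quotient.exact ((Quotient.out_eq (Quotient.mk c₁.toSetoid y)))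
    have hU : h2.toFinset = hfin.toFinset.biUnion F := by
      ext y
      simp only [Set.Finite.mem_toFinset, Finset.mem_biUnion, Set.mem_setOf_eq]
      constructor
      · intro hy
        refine ⟨Quotient.mk c₁.toSetoid y, ?_, ?_⟩
        · exact c₂.iseqv.trans (hfine _ _ (hout y)) (c₂.iseqv.symm hy)
        · rw [hmemF _ (by
            exact c₂.iseqv.trans (hfine _ _ (hout y)) (c₂.iseqv.symm hy))]
          exact hout y
      · rintro ⟨u, hu, hyu⟩
        rw [hmemF u hu] at hyu
        exact c₂.iseqv.trans (c₂.iseqv.symm hu) (hfine _ _ hyu)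
    have hdisj : (hfin.toFinset : Set (Quotient c₁.toSetoid)).PairwiseDisjoint F := by
      intro u hu v hv huv
      simp only [Set.Finite.coe_toFinset, Set.mem_setOf_eq] at hu hv
      refine Finset.disjoint_left.mpr ?_
      intro y hyu hyv
      rw [hmemF u hu] at hyu
      rw [hmemF v hv] at hyv
      apply huv
      have : Quotient.mk c₁.toSetoid u.out = Quotient.mk c₁.toSetoid v.out := by
        refine Quotient.sound ?_
        exact c₁.iseqv.trans hyu (c₁.iseqv.symm hyv)
      calc u = Quotient.mk c₁.toSetoid u.out := (Quotient.out_eq u).symm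
        _ = Quotient.mk c₁.toSetoid v.out := this
        _ = v := Quotient.out_eq v
    rw [StiffCongruence.Tclass, dif_pos h2]
    have hRHS : ∀ u ∈ hfin.toFinset, c₁.Tclass u.out = ∑ y ∈ F u, SB y := by
      intro u hu
      rw [Set.Finite.mem_toFinset] at hu
      have h1 : {y | c₁.r u.out y}.Finite := c₁.finite_class _ (hred u hu)
      rw [StiffCongruence.Tclass, dif_pos h1, hF]
      simp [dif_pos h1]
    rw [Finset.sum_congr rfl hRHS, ← Finset.sum_biUnion hdisj, ← hU]
  refine ⟨key, ?_⟩
  rw [Submodule.span_le]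
  rintro f ⟨x, hx, rfl⟩
  have h2 : {y | c₂.r y x}.Finite := by
    have h := c₂.finite_class x hx
    have : {y | c₂.r y x} = {y | c₂.r x y} := by
      ext y; exact ⟨fun h' => c₂.iseqv.symm h', fun h' => c₂.iseqv.symm h'⟩
    rw [this]; exact h
  have hfin : {u : Quotient c₁.toSetoid | c₂.r u.out x}.Finite :=
    h2.preimage (Set.injOn_of_injective Quotient.out_injective)
  rw [SetLike.mem_coe, key x hx hfin]
  refine Submodule.sum_mem _ ?_
  intro u hu
  rw [Set.Finite.mem_toFinset] at hu
  exact Submodule.subset_span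
    ⟨u.out, c₂.reduced_class hx (c₂.iseqv.symm hu), rfl⟩
end

section
/- For any nonnegative integer γ, the n-th homogeneous component of the Hopf algebra H(FHeap_γ) has dimension (γ+2)^{n-1} for n ≥ 1. Equivalently, the number of horizontally connected heaps of friable pieces of width γ+1 with n pieces equals (γ+2)^{n-1}; these are in bijection with sequences of k words over the alphabet {0,1,…,γ} having a total of n-k letters (summed over k ≥ 1). -/
/-- `FHmem γ w n` : the word `w` of nonnegative integers is an element of the
sub-PRO `FHeap_γ` of `B(ℕ)` generated by the sequence `1^{γ+1}`, built using
exactly `n` insertions of the generator. The units are the constant-zero words,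
horizontal composition is concatenation and vertical composition is the
componentwise addition of words of the same length. Such a word encodes a heap
of `n` friable pieces of width `γ+1`. -/
inductive FHmem (γ : ℕ) : List ℕ → ℕ → Prop
  | unit (p : ℕ) : FHmem γ (List.replicate p 0) 0
  | gen : FHmem γ (List.replicate (γ + 1) 1) 1
  | hcomp {u v : List ℕ} {m n : ℕ} : FHmem γ u m → FHmem γ v n →
      FHmem γ (u ++ v) (m + n)
  | vcomp {u v : List ℕ} {m n : ℕ} : FHmem γ u m → FHmem γ v n →
      u.length = v.length → FHmem γ (List.zipWith (· + ·) u v) (m + n)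

/-- Membership in `FHeap_γ`. -/
def InFH (γ : ℕ) (u : List ℕ) : Prop := ∃ m, FHmem γ u m

/-- A reduced element of `FHeap_γ`: an element whose maximal horizontal
decomposition contains no wire `1_1 = [0]`, i.e. a horizontally connected heap
of friable pieces. -/
def ReducedFH (γ : ℕ) (w : List ℕ) : Prop :=
  InFH γ w ∧ ¬ ∃ u v : List ℕ, InFH γ u ∧ InFH γ v ∧ w = u ++ [0] ++ v

/-!
A heap is determined by the multiset of left ends of its pieces, and its word lists the number of
pieces above each column. Every element of `FHeap_γ` is such a word, and the multiset can be read
back off the word column by column from the left. A factor `1_1` of the maximal decomposition is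
a column carrying no piece, so the reduced heaps are those covering every column. In such a heap
the leftmost piece starts at `0` and, listing the pieces from left to right, consecutive left ends
differ by at most `γ + 1`; the `n - 1` gaps, with values in `{0, …, γ + 1}`, encode the heap
bijectively. A sequence of words is encoded by writing its words one after the other, separated by
one extra letter: this is a bijection onto the words of length `n - 1` over `γ + 2` letters.
-/

namespace List

variable {α : Type*}

theorem length_intercalate_singleton_add_one (x : α) {ls : List (List α)} (h : ls ≠ []) :
    ([x].intercalate ls).length + 1 = ls.length + (ls.map length).sum := by
  induction ls with
  | nil => exact absurd rfl h
  | cons l ls ih =>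
    cases ls with
    | nil => simp [Nat.add_comm]
    | cons l' ls =>
      rw [intercalate_cons_cons]
      have := ih (cons_ne_nil _ _)
      simp only [length_append, length_cons, length_nil, map_cons, sum_cons] at this ⊢
      omega

theorem notMem_of_mem_splitOn [BEq α] [LawfulBEq α] {x : α} {xs l : List α}
    (hl : l ∈ xs.splitOn x) : x ∉ l := by
  induction xs generalizing l with
  | nil => simp_all
  | cons y xs ih =>
    rw [splitOn_cons_eq_if_modifyHead] at hl
    split at hl
    · rcases mem_cons.1 hl with rfl | hl
      · simp
      · exact ih hl
    · rename_i hy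
      obtain ⟨l₀, ls, hls⟩ := exists_cons_of_ne_nil (splitOn_ne_nil x xs)
      rw [hls, modifyHead_cons, mem_cons] at hl
      rcases hl with rfl | hl
      · simp only [beq_iff_eq] at hy
        simpa [Ne.symm hy] using ih (hls ▸ mem_cons_self)
      · exact ih (hls ▸ mem_cons_of_mem _ hl)

theorem map_some_reduceOption {l : List (Option α)} (h : none ∉ l) :
    l.reduceOption.map some = l := by
  induction l with
  | nil => rfl
  | cons a l ih =>
    cases a with
    | none => simp at h
    | some a => simp_all [reduceOption_cons_of_some]

end List

section WordSequences

variable {α : Type*}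

def joinWithNone (ls : List (List α)) : List (Option α) :=
  [none].intercalate (ls.map (List.map some))

theorem length_joinWithNone_add_one {ls : List (List α)} (h : ls ≠ []) :
    (joinWithNone ls).length + 1 = ls.length + (ls.map List.length).sum := by
  rw [joinWithNone, List.length_intercalate_singleton_add_one _ (by simpa using h)]
  simp [Function.comp_def]

theorem joinWithNone_injOn : Set.InjOn (joinWithNone (α := α)) {ls | ls ≠ []} := by
  classical
  intro ls h ls' h' he
  have hsep : ∀ ls : List (List α), ∀ l ∈ ls.map (List.map some), none ∉ l := by simp
  have := congrArg (List.splitOn none) he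
  rw [joinWithNone, joinWithNone, List.splitOn_intercalate _ (hsep ls) (by simpa using h),
    List.splitOn_intercalate _ (hsep ls') (by simpa using h')] at this
  exact List.map_injective_iff.2 (List.map_injective_iff.2 (Option.some_injective α)) this

theorem exists_joinWithNone_eq (s : List (Option α)) : ∃ ls ≠ [], joinWithNone ls = s := by
  classical
  refine ⟨(s.splitOn none).map List.reduceOption, by simp [List.splitOn_ne_nil], ?_⟩
  have : ((s.splitOn none).map List.reduceOption).map (List.map some) = s.splitOn none := by
    rw [List.map_map]
    conv_rhs => rw [← List.map_id (s.splitOn none)]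
    exact List.map_congr_left fun l hl =>
      List.map_some_reduceOption (List.notMem_of_mem_splitOn hl)
  rw [joinWithNone, this, List.intercalate_splitOn]

theorem card_wordLists_eq_card_vector_option (n : ℕ) :
    Nat.card {ls : List (List α) // 0 < ls.length ∧ ls.length + (ls.map List.length).sum = n + 1}
      = Nat.card (List.Vector (Option α) n) := by
  refine Nat.card_eq_of_bijective (fun ls => ⟨joinWithNone ls.1, ?_⟩) ⟨?_, ?_⟩
  · have := length_joinWithNone_add_one (List.ne_nil_of_length_pos ls.2.1)
    omega
  · rintro ⟨ls, hls⟩ ⟨ls', hls'⟩ he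
    exact Subtype.ext (joinWithNone_injOn (List.ne_nil_of_length_pos hls.1)
      (List.ne_nil_of_length_pos hls'.1) (congrArg Subtype.val he))
  · rintro ⟨s, hs⟩
    obtain ⟨ls, hne, rfl⟩ := exists_joinWithNone_eq s
    have := length_joinWithNone_add_one hne
    exact ⟨⟨ls, List.length_pos_iff.2 hne, by omega⟩, rfl⟩

end WordSequences

namespace FHeap

/- A heap is given by the multiset `P` of the left ends of its pieces; `word γ P L` is its element
of `B(ℕ)` on `L` columns. -/
def load (γ : ℕ) (P : Multiset ℕ) (j : ℕ) : ℕ :=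
  P.countP fun p => p ≤ j ∧ j < p + (γ + 1)

def word (γ : ℕ) (P : Multiset ℕ) (L : ℕ) : List ℕ :=
  (List.range L).map (load γ P)

def Fits (γ : ℕ) (P : Multiset ℕ) (L : ℕ) : Prop :=
  ∀ p ∈ P, p + (γ + 1) ≤ L

def Covers (γ : ℕ) (P : Multiset ℕ) (L : ℕ) : Prop :=
  ∀ j < L, ∃ p ∈ P, p ≤ j ∧ j < p + (γ + 1)

variable {γ : ℕ} {P Q : Multiset ℕ} {L : ℕ}

theorem Fits.mono (hP : Fits γ P L) {L' : ℕ} (hL : L ≤ L') : Fits γ P L' :=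
  fun p hp => (hP p hp).trans hL

@[simp]
theorem length_word : (word γ P L).length = L := by
  simp [word]

theorem word_eq_word_iff : word γ P L = word γ Q L ↔ ∀ j < L, load γ P j = load γ Q j := by
  simp [word, List.map_inj_left]

theorem load_add (j : ℕ) : load γ (P + Q) j = load γ P j + load γ Q j :=
  Multiset.countP_add _ _ _

theorem word_zero (L : ℕ) : word γ 0 L = List.replicate L 0 := by
  simp [word, load, List.eq_replicate_iff]

theorem word_add : word γ (P + Q) L = List.zipWith (· + ·) (word γ P L) (word γ Q L) := by
  simp [word, List.zipWith_map, load_add]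

theorem word_singleton_zero : word γ {0} (γ + 1) = List.replicate (γ + 1) 1 := by
  simp +contextual [word, load, List.eq_replicate_iff, ← Multiset.cons_zero, Multiset.countP_cons]

theorem zero_notMem_word : 0 ∉ word γ P L ↔ Covers γ P L := by
  simp [word, Covers, load, Nat.pos_iff_ne_zero.symm, Multiset.countP_pos]

theorem word_append (hP : Fits γ P L) (Q : Multiset ℕ) (L' : ℕ) :
    word γ P L ++ word γ Q L' = word γ (P + Q.map (· + L)) (L + L') := by
  have hlow : ∀ j < L, load γ (Q.map (· + L)) j = 0 := fun j hj => by
    rw [load, Multiset.countP_eq_zero]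
    simp only [Multiset.mem_map]
    rintro _ ⟨q, _, rfl⟩
    omega
  have hhigh : ∀ j, load γ P (L + j) = 0 := fun j => by
    simp only [load, Multiset.countP_eq_zero]
    intro p hp
    have := hP p hp
    omega
  have hshift : ∀ j, load γ (Q.map (· + L)) (L + j) = load γ Q j := fun j => by
    rw [load, load, Multiset.countP_map, ← Multiset.countP_eq_card_filter]
    exact Multiset.countP_congr rfl fun p _ => propext (by omega)
  simp only [word, List.range_add, List.map_append, List.map_map]
  congr 1
  · exact List.map_congr_left fun j hj => by simp [load_add, hlow j (List.mem_range.1 hj)]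
  · exact List.map_congr_left fun j _ => by simp [load_add, hhigh, hshift]

theorem word_singleton {p : ℕ} (h : p + (γ + 1) ≤ L) :
    word γ {p} L =
      List.replicate p 0 ++ (List.replicate (γ + 1) 1 ++ List.replicate (L - p - (γ + 1)) 0) := by
  obtain ⟨r, rfl⟩ := Nat.exists_eq_add_of_le h
  rw [← word_zero, ← word_zero, ← word_singleton_zero, word_append (fun _ => by simp),
    word_append (fun _ => by simp)]
  simp [add_assoc]

theorem fhmem_word (hP : Fits γ P L) : FHmem γ (word γ P L) (Multiset.card P) := by
  induction P using Multiset.induction_on with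
  | empty => simpa [word_zero] using FHmem.unit (γ := γ) L
  | cons p P ih =>
    have hp := hP p (Multiset.mem_cons_self p P)
    have hsingle : FHmem γ (word γ {p} L) 1 := by
      simpa [word_singleton hp] using (FHmem.unit p).hcomp (FHmem.gen.hcomp (FHmem.unit _))
    have := hsingle.vcomp (ih fun q hq => hP q (Multiset.mem_cons_of_mem hq)) (by simp)
    rwa [← word_add, Multiset.singleton_add, add_comm 1, ← Multiset.card_cons] at this

theorem exists_eq_word_of_fhmem {w : List ℕ} {n : ℕ} (h : FHmem γ w n) :
    ∃ P L, Multiset.card P = n ∧ Fits γ P L ∧ w = word γ P L := by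
  induction h with
  | unit p => exact ⟨0, p, rfl, by simp [Fits], by simp [word_zero]⟩
  | gen => exact ⟨{0}, γ + 1, rfl, by simp [Fits], by simp [word_singleton_zero]⟩
  | hcomp _ _ ihu ihv =>
    obtain ⟨P, L, rfl, hP, rfl⟩ := ihu
    obtain ⟨Q, L', rfl, hQ, rfl⟩ := ihv
    refine ⟨P + Q.map (· + L), L + L', by simp, ?_, word_append hP Q L'⟩
    simp only [Fits, Multiset.mem_add, Multiset.mem_map] at hP hQ ⊢
    rintro _ (hp | ⟨q, hq, rfl⟩)
    · linarith [hP _ hp]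
    · linarith [hQ q hq]
  | vcomp _ _ hl ihu ihv =>
    obtain ⟨P, L, rfl, hP, rfl⟩ := ihu
    obtain ⟨Q, L', rfl, hQ, rfl⟩ := ihv
    simp only [length_word] at hl
    subst hl
    exact ⟨P + Q, L, by simp, fun p hp => (Multiset.mem_add.1 hp).elim (hP p) (hQ p), word_add.symm⟩

theorem load_eq_count_add (P : Multiset ℕ) (j : ℕ) :
    load γ P j = P.count j + (P.filter (· < j)).countP (fun p => j < p + (γ + 1)) := by
  rw [load, Multiset.countP_eq_countP_filter_add _ _ (· < j), add_comm, Multiset.countP_filter,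
    Multiset.countP_filter, Multiset.countP_filter, Multiset.count]
  congr 1 <;> exact Multiset.countP_congr rfl fun p _ => propext (by omega)

theorem word_injective (hP : Fits γ P L) (hQ : Fits γ Q L) (h : word γ P L = word γ Q L) :
    P = Q := by
  rw [word_eq_word_iff] at h
  refine Multiset.ext' fun j => ?_
  -- The pieces starting at `j` are those over column `j` that do not start further left.
  induction j using Nat.strong_induction_on with
  | _ j ih =>
    by_cases hj : j < L
    · have hbelow : P.filter (· < j) = Q.filter (· < j) := Multiset.ext' fun i => by
        simp only [Multiset.count_filter]
        split_ifs with hi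
        exacts [ih i hi, rfl]
      have := h j hj
      rw [load_eq_count_add, load_eq_count_add, hbelow] at this
      omega
    · rw [Multiset.count_eq_zero.2 fun hm => hj (by linarith [hP j hm]),
        Multiset.count_eq_zero.2 fun hm => hj (by linarith [hQ j hm])]

theorem exists_eq_append_zero_append (hP : Fits γ P L) (h0 : 0 ∈ word γ P L) :
    ∃ u v, InFH γ u ∧ InFH γ v ∧ word γ P L = u ++ [0] ++ v := by
  obtain ⟨k, hk, hload⟩ : ∃ k < L, load γ P k = 0 := by simpa [word, eq_comm] using h0
  obtain ⟨m, rfl⟩ : ∃ m, L = k + 1 + m := ⟨L - (k + 1), by omega⟩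
  have hsplit : ∀ p ∈ P, p + (γ + 1) ≤ k ∨ k + 1 ≤ p := by
    intro p hp
    have := Multiset.countP_eq_zero.1 hload p hp
    omega
  set P₁ := P.filter (· < k)
  set P₂ := (P.filter fun p => ¬ p < k).map (· - (k + 1))
  have hshift : P₂.map (· + (k + 1)) = P.filter fun p => ¬ p < k := by
    rw [Multiset.map_map]
    conv_rhs => rw [← Multiset.map_id (P.filter _)]
    refine Multiset.map_congr rfl fun p hp => ?_
    obtain ⟨hp, hpk⟩ := Multiset.mem_filter.1 hp
    have := hsplit p hp
    simp only [Function.comp_apply, id]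
    omega
  have hP₁ : Fits γ P₁ k := fun p hp => by
    obtain ⟨hp, hpk⟩ := Multiset.mem_filter.1 hp
    have := hsplit p hp
    omega
  have hP₂ : Fits γ P₂ m := fun p hp => by
    obtain ⟨q, hq, rfl⟩ := Multiset.mem_map.1 hp
    obtain ⟨hq, hqk⟩ := Multiset.mem_filter.1 hq
    have := hP q hq
    have := hsplit q hq
    omega
  refine ⟨word γ P₁ k, word γ P₂ m, ⟨_, fhmem_word hP₁⟩, ⟨_, fhmem_word hP₂⟩, ?_⟩
  have hzero : word γ P₁ k ++ [0] = word γ P₁ (k + 1) := by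
    simpa [word_zero] using word_append hP₁ 0 1
  rw [hzero, word_append (hP₁.mono k.le_succ), hshift, Multiset.filter_add_not]

theorem reducedFH_iff {w : List ℕ} : ReducedFH γ w ↔ InFH γ w ∧ 0 ∉ w := by
  refine ⟨fun h => ⟨h.1, fun h0 => h.2 ?_⟩, fun h => ⟨h.1, ?_⟩⟩
  · obtain ⟨n, hw⟩ := h.1
    obtain ⟨P, L, -, hP, rfl⟩ := exists_eq_word_of_fhmem hw
    exact exists_eq_append_zero_append hP h0
  · rintro ⟨u, v, -, -, rfl⟩
    exact h.2 (by simp)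

/- The heap whose pieces, from left to right, start at `0` and then at the successive partial sums
of the gaps `d`. -/
def gapHeap : List ℕ → Multiset ℕ
  | [] => {0}
  | g :: d => 0 ::ₘ (gapHeap d).map (· + g)

theorem card_gapHeap (d : List ℕ) : Multiset.card (gapHeap d) = d.length + 1 := by
  cases d <;> simp [gapHeap, card_gapHeap]

theorem zero_mem_gapHeap (d : List ℕ) : 0 ∈ gapHeap d := by
  cases d <;> simp [gapHeap]

theorem fits_gapHeap (d : List ℕ) : Fits γ (gapHeap d) (d.sum + (γ + 1)) := by
  induction d with
  | nil => simp [gapHeap, Fits]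
  | cons g d ih =>
    simp only [Fits, gapHeap, Multiset.mem_cons, Multiset.mem_map, List.sum_cons] at ih ⊢
    rintro _ (rfl | ⟨p, hp, rfl⟩)
    · omega
    · linarith [ih p hp]

theorem covers_gapHeap {d : List ℕ} (hd : ∀ g ∈ d, g ≤ γ + 1) :
    Covers γ (gapHeap d) (d.sum + (γ + 1)) := by
  induction d with
  | nil => exact fun j hj => ⟨0, by simp [gapHeap], by omega, by simpa using hj⟩
  | cons g d ih =>
    intro j hj
    by_cases hj₀ : j < γ + 1
    · exact ⟨0, zero_mem_gapHeap _, by omega, by omega⟩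
    · have hg := hd g List.mem_cons_self
      obtain ⟨p, hp, hpj⟩ := ih (fun g' hg' => hd g' (List.mem_cons_of_mem _ hg')) (j - g)
        (by simp only [List.sum_cons] at hj; omega)
      exact ⟨p + g, Multiset.mem_cons_of_mem (Multiset.mem_map_of_mem _ hp), by omega, by omega⟩

theorem gapHeap_injective : Function.Injective gapHeap := by
  intro d d' h
  induction d generalizing d' with
  | nil =>
    cases d' with
    | nil => rfl
    | cons g' d' =>
      have := congrArg Multiset.card h
      simp [card_gapHeap] at this
  | cons g d ih =>
    cases d' with
    | nil =>
      have := congrArg Multiset.card h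
      simp [card_gapHeap] at this
    | cons g' d' =>
      rw [gapHeap, gapHeap, Multiset.cons_inj_right] at h
      have hle : ∀ {g g' : ℕ} {d d' : List ℕ},
          (gapHeap d).map (· + g) = (gapHeap d').map (· + g') → g' ≤ g := by
        intro g g' d d' h
        obtain ⟨p, -, hp⟩ :=
          Multiset.mem_map.1 (h ▸ Multiset.mem_map_of_mem (· + g) (zero_mem_gapHeap d))
        omega
      obtain rfl : g = g' := le_antisymm (hle h.symm) (hle h)
      rw [ih (Multiset.map_injective (add_left_injective g) h)]

theorem zero_mem_of_covers (hP : Fits γ P L) (hcov : Covers γ P L) (hne : P ≠ 0) : 0 ∈ P := by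
  obtain ⟨p, hp⟩ := Multiset.exists_mem_of_ne_zero hne
  obtain ⟨q, hq, hq0, -⟩ := hcov 0 (by linarith [hP p hp])
  rwa [Nat.le_zero.1 hq0] at hq

theorem fits_map_sub {g : ℕ} (hP : Fits γ P L) (hg : ∀ p ∈ P, g ≤ p) :
    Fits γ (P.map (· - g)) (L - g) := by
  simp only [Fits, Multiset.mem_map]
  rintro _ ⟨p, hp, rfl⟩
  have := hP p hp
  have := hg p hp
  omega

theorem covers_map_sub {g : ℕ} (hcov : Covers γ (0 ::ₘ P) L) (hg : g ∈ P)
    (hmin : ∀ p ∈ P, g ≤ p) : Covers γ (P.map (· - g)) (L - g) := by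
  intro j hj
  obtain ⟨q, hq, hqj⟩ := hcov (j + g) (by omega)
  rcases Multiset.mem_cons.1 hq with rfl | hq
  · exact ⟨g - g, Multiset.mem_map_of_mem _ hg, by omega, by omega⟩
  · have := hmin q hq
    exact ⟨q - g, Multiset.mem_map_of_mem _ hq, by omega, by omega⟩

theorem exists_gapHeap_eq {n : ℕ} (hcard : Multiset.card P = n + 1) (hP : Fits γ P L)
    (hcov : Covers γ P L) : ∃ d : List (Fin (γ + 2)),
      d.length = n ∧ gapHeap (d.map (↑)) = P ∧ (d.map (↑)).sum + (γ + 1) = L := by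
  induction n generalizing P L with
  | zero =>
    obtain ⟨P, rfl⟩ := Multiset.exists_cons_of_mem
      (zero_mem_of_covers hP hcov (Multiset.card_pos.1 (by omega)))
    obtain rfl : P = 0 := Multiset.card_eq_zero.1 (by simpa using hcard)
    refine ⟨[], rfl, rfl, ?_⟩
    simp only [List.map_nil, List.sum_nil, zero_add]
    refine le_antisymm (by simpa using hP 0 (Multiset.mem_cons_self 0 0)) (not_lt.1 fun hL => ?_)
    obtain ⟨q, hq, hqj⟩ := hcov (γ + 1) hL
    simp only [Multiset.mem_singleton, Multiset.cons_zero] at hq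
    omega
  | succ n ih =>
    obtain ⟨P, rfl⟩ := Multiset.exists_cons_of_mem
      (zero_mem_of_covers hP hcov (Multiset.card_pos.1 (by omega)))
    rw [Multiset.card_cons] at hcard
    have hne : ∃ p, p ∈ P := Multiset.card_pos_iff_exists_mem.1 (by omega)
    obtain ⟨g, hg, hmin⟩ : ∃ g ∈ P, ∀ p ∈ P, g ≤ p :=
      ⟨Nat.find hne, Nat.find_spec hne, fun p hp => Nat.find_min' hne hp⟩
    have hgL := hP g (Multiset.mem_cons_of_mem hg)
    have hgγ : g ≤ γ + 1 := by
      by_contra! hgγ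
      obtain ⟨q, hq, hqj⟩ := hcov (γ + 1) (by omega)
      rcases Multiset.mem_cons.1 hq with rfl | hq
      · omega
      · linarith [hmin q hq]
    have hshift : (P.map (· - g)).map (· + g) = P := by
      rw [Multiset.map_map]
      conv_rhs => rw [← Multiset.map_id P]
      exact Multiset.map_congr rfl fun p hp => by simp [Nat.sub_add_cancel (hmin p hp)]
    obtain ⟨d, hlen, hd, hsum⟩ := ih (by simpa using hcard)
      (fits_map_sub (fun p hp => hP p (Multiset.mem_cons_of_mem hp)) hmin)
      (covers_map_sub hcov hg hmin)
    refine ⟨⟨g, by omega⟩ :: d, by simp [hlen], by simp [gapHeap, hd, hshift], ?_⟩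
    simp only [List.map_cons, List.sum_cons]
    omega

def gapWord (γ : ℕ) (d : List ℕ) : List ℕ :=
  word γ (gapHeap d) (d.sum + (γ + 1))

theorem fhmem_gapWord (d : List ℕ) : FHmem γ (gapWord γ d) (d.length + 1) := by
  simpa [gapWord, card_gapHeap] using fhmem_word (fits_gapHeap (γ := γ) d)

theorem reducedFH_gapWord {d : List ℕ} (hd : ∀ g ∈ d, g ≤ γ + 1) : ReducedFH γ (gapWord γ d) :=
  reducedFH_iff.2 ⟨⟨_, fhmem_gapWord d⟩, zero_notMem_word.2 (covers_gapHeap hd)⟩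

theorem gapWord_injective : Function.Injective (gapWord γ) := by
  intro d d' h
  have hL : d.sum = d'.sum := by simpa [gapWord] using congrArg List.length h
  rw [gapWord, gapWord, ← hL] at h
  refine gapHeap_injective (word_injective (fits_gapHeap d) ?_ h)
  simpa only [hL] using fits_gapHeap d'

theorem card_reduced_eq_card_vector (γ n : ℕ) :
    Nat.card {w : List ℕ // FHmem γ w (n + 1) ∧ ReducedFH γ w}
      = Nat.card (List.Vector (Fin (γ + 2)) n) := by
  symm
  refine Nat.card_eq_of_bijective
    (fun d => ⟨gapWord γ (d.1.map (↑)), by simpa using fhmem_gapWord (γ := γ) (d.1.map (↑)),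
      reducedFH_gapWord fun g hg => by
        obtain ⟨g, -, rfl⟩ := List.mem_map.1 hg
        exact Nat.le_of_lt_succ g.2⟩) ⟨?_, ?_⟩
  · intro d d' h
    exact Subtype.ext (List.map_injective_iff.2 Fin.val_injective
      (gapWord_injective (congrArg Subtype.val h)))
  · rintro ⟨w, hw, hred⟩
    obtain ⟨P, L, hcard, hP, rfl⟩ := exists_eq_word_of_fhmem hw
    obtain ⟨d, hlen, hd, hsum⟩ :=
      exists_gapHeap_eq hcard hP (zero_notMem_word.1 (reducedFH_iff.1 hred).2)
    exact ⟨⟨d, hlen⟩, Subtype.ext (by simp [gapWord, hd, hsum])⟩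

end FHeap

/-- **Proposition 4.2.** For any nonnegative integer `γ` and any `n ≥ 1`, the
`n`-th homogeneous component of `H(FHeap_γ)` has dimension `(γ+2)^{n-1}`:
the number of horizontally connected heaps of `n` friable pieces of width
`γ+1` is `(γ+2)^{n-1}`, and these are in bijection with the sequences of
`k ≥ 1` words over the alphabet `{0, 1, …, γ}` having a total of `n - k`
letters, which are also counted by `(γ+2)^{n-1}`. -/
theorem FHeap_dimensions (γ n : ℕ) (hn : 1 ≤ n) :
    Nat.card {w : List ℕ // FHmem γ w n ∧ ReducedFH γ w} = (γ + 2) ^ (n - 1) ∧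
    Nat.card {l : List (List (Fin (γ + 1))) //
        0 < l.length ∧ l.length + (l.map List.length).sum = n}
      = (γ + 2) ^ (n - 1) := by
  obtain ⟨m, rfl⟩ : ∃ m, n = m + 1 := ⟨n - 1, by omega⟩
  rw [FHeap.card_reduced_eq_card_vector, card_wordLists_eq_card_vector_option,
    Nat.card_eq_fintype_card, Nat.card_eq_fintype_card, card_vector, card_vector,
    Fintype.card_option, Fintype.card_fin, Fintype.card_fin, Nat.add_sub_cancel]
  exact ⟨rfl, rfl⟩
end
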